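/- For every r > 0, every real x with −sinh r < x ≤ 0, and every real y with y ≠ x, the geodesic γ(x,y) with ideal endpoints x and y intersects the closed hyperbolic disc B̄_r(i) if and only if y ≥ −W_r(−x) or y ≤ −U_r(−x). -/

import Mathlib

open UpperHalfPlane MeasureTheory

/-- The complete hyperbolic geodesic of the upper half-plane with ideal endpoints `a` and `b`:
the Euclidean semicircle `{z ∈ ℍ : |z − (a+b)/2| = |a−b|/2}`. -/
noncomputable def geodesic (a b : ℝ) : Set ℍ :=
  {z : ℍ | ‖(z : ℂ) - (((a + b) / 2 : ℝ) : ℂ)‖ = |a - b| / 2}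

/-- The geodesic `γ(a,b)` is tangent to the hyperbolic disc `B_ρ(i)`:
the infimum of the hyperbolic distance from points of the geodesic to `i` equals `ρ`. -/
def TangentToDisc (a b ρ : ℝ) : Prop :=
  sInf ((fun z : ℍ => dist z UpperHalfPlane.I) '' geodesic a b) = ρ

/-- The geodesic `γ(a,b)` intersects the closed hyperbolic disc `B̄_r(i)`. -/
def MeetsClosedDisc (a b r : ℝ) : Prop :=
  ∃ z ∈ geodesic a b, dist z UpperHalfPlane.I ≤ r

open Real

/-! On the semicircle `γ(x, y)`, with centre `c = (x + y)/2` and radius `ρ = |x − y|/2`, write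
`z = c + u + iv`. Since `cosh d(z, i) = (|z|² + 1)/(2 Im z)`, the condition `d(z, i) ≤ r` becomes the
linear inequality `(c² + ρ² + 1)/2 ≤ cosh r · v − c u`, and by Cauchy–Schwarz the circle meets this
half-plane iff `(c² + ρ² + 1)² ≤ 4ρ²(cosh² r + c²)`, which simplifies to
`(x² + 1)(y² + 1) ≤ cosh² r · (x − y)²`. With `cosh² r = 1 + sinh² r` this quadratic inequality in
`y` factors, and its roots are `−W_r(−x)` and `−U_r(−x)`. -/

lemma mem_geodesic_iff {a b : ℝ} {z : ℍ} :
    z ∈ geodesic a b ↔ (z.re - (a + b) / 2) ^ 2 + z.im ^ 2 = (|a - b| / 2) ^ 2 := by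
  rw [geodesic, Set.mem_ofPred_eq, ← sq_eq_sq₀ (norm_nonneg _) (by positivity), Complex.sq_norm,
    Complex.normSq_apply]
  simp [sq]

lemma dist_I_le_iff {z : ℍ} {r : ℝ} (hr : 0 ≤ r) :
    dist z I ≤ r ↔ z.re ^ 2 + z.im ^ 2 + 1 ≤ 2 * z.im * cosh r := by
  rw [← cosh_strictMonoOn.le_iff_le dist_nonneg hr, cosh_dist', div_le_iff₀ (by simp [z.im_pos])]
  simp [mul_comm]

lemma exists_pos_sq_add_sq_eq_le_iff {c ρ K A : ℝ} (hρ : 0 ≤ ρ) (hK : 0 < K) (hA : 0 < A) :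
    (∃ u v : ℝ, 0 < v ∧ u ^ 2 + v ^ 2 = ρ ^ 2 ∧ A ≤ K * v - c * u) ↔
      A ^ 2 ≤ ρ ^ 2 * (K ^ 2 + c ^ 2) := by
  constructor
  · rintro ⟨u, v, -, hcirc, hle⟩
    calc A ^ 2 ≤ (K * v - c * u) ^ 2 := pow_le_pow_left₀ hA.le hle 2
      _ ≤ (K * v - c * u) ^ 2 + (K * u + c * v) ^ 2 := le_add_of_nonneg_right (sq_nonneg _)
      _ = ρ ^ 2 * (K ^ 2 + c ^ 2) := by rw [← hcirc]; ring
  · intro h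
    set s := √(K ^ 2 + c ^ 2)
    have hs : 0 < s := Real.sqrt_pos.2 (by positivity)
    have hss : s ^ 2 = K ^ 2 + c ^ 2 := Real.sq_sqrt (by positivity)
    have hAρs : A ≤ ρ * s := by
      rwa [← Real.sqrt_sq hρ, ← Real.sqrt_mul (sq_nonneg ρ), Real.le_sqrt hA.le (by positivity)]
    have hρ' : 0 < ρ := pos_of_mul_pos_left (hA.trans_le hAρs) hs.le
    -- the maximiser of `K * v - c * u` on the circle is `ρ • (-c, K) / ‖(-c, K)‖`
    refine ⟨-(ρ * c / s), ρ * K / s, by positivity, ?_, ?_⟩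
    · field_simp
      rw [hss]; ring
    · convert hAρs using 1
      field_simp
      rw [hss]; ring

lemma meetsClosedDisc_iff {x y r : ℝ} (hr : 0 ≤ r) :
    MeetsClosedDisc x y r ↔ (x ^ 2 + 1) * (y ^ 2 + 1) ≤ cosh r ^ 2 * (x - y) ^ 2 := by
  set c := (x + y) / 2 with hc
  set ρ := |x - y| / 2 with hρ
  set A := (c ^ 2 + ρ ^ 2 + 1) / 2
  have key : ρ ^ 2 * (cosh r ^ 2 + c ^ 2) - A ^ 2
      = (cosh r ^ 2 * (x - y) ^ 2 - (x ^ 2 + 1) * (y ^ 2 + 1)) / 4 := by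
    simp only [A, c, ρ, div_pow, sq_abs]; ring
  have hmeets : MeetsClosedDisc x y r ↔
      ∃ u v : ℝ, 0 < v ∧ u ^ 2 + v ^ 2 = ρ ^ 2 ∧ A ≤ cosh r * v - c * u := by
    constructor
    · rintro ⟨z, hz, hd⟩
      rw [mem_geodesic_iff, ← hc, ← hρ] at hz
      rw [dist_I_le_iff hr] at hd
      exact ⟨z.re - c, z.im, z.im_pos, hz, by linear_combination (hd - hz) / 2⟩
    · rintro ⟨u, v, hv, hcirc, hle⟩
      refine ⟨UpperHalfPlane.mk ⟨c + u, v⟩ hv, ?_, ?_⟩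
      · rw [mem_geodesic_iff, ← hc, ← hρ]; simpa using hcirc
      · rw [dist_I_le_iff hr]
        simp only [mk_re, mk_im]
        linear_combination 2 * hle + hcirc
  rw [hmeets, exists_pos_sq_add_sq_eq_le_iff (by positivity) (cosh_pos r) (by positivity)]
  constructor <;> intro h <;> linarith

lemma mul_nonneg_iff_of_mul_lt_mul {α : Type*} [CommRing α] [LinearOrder α] [IsStrictOrderedRing α]
    {a b u v : α} (ha : 0 < a) (hb : 0 < b) (h : b * u < a * v) :
    0 ≤ u * v ↔ 0 ≤ u ∨ v ≤ 0 := by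
  rw [mul_nonneg_iff]
  constructor
  · rintro (⟨hu, -⟩ | ⟨-, hv⟩)
    exacts [Or.inl hu, Or.inr hv]
  · rintro (hu | hv)
    · exact Or.inl ⟨hu, (pos_of_mul_pos_right ((mul_nonneg hb.le hu).trans_lt h) ha.le).le⟩
    · have hbu : b * u < 0 := h.trans_le (mul_nonpos_of_nonneg_of_nonpos ha.le hv)
      exact Or.inr ⟨(neg_of_mul_neg_right hbu hb.le).le, hv⟩

lemma sq_add_one_mul_sq_add_one_le_iff {t x y : ℝ} (hxt : |x| < t) :
    (x ^ 2 + 1) * (y ^ 2 + 1) ≤ (1 + t ^ 2) * (x - y) ^ 2 ↔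
      (x * t + 1) / (t - x) ≤ y ∨ y ≤ (x * t - 1) / (t + x) := by
  obtain ⟨hlt, hgt⟩ := abs_lt.1 hxt
  have ht : 0 < t := (abs_nonneg x).trans_lt hxt
  have hsub : 0 < t - x := by linarith
  have hadd : 0 < t + x := by linarith
  have hfactor : (1 + t ^ 2) * (x - y) ^ 2 - (x ^ 2 + 1) * (y ^ 2 + 1)
      = (y * (t - x) - (x * t + 1)) * (y * (t + x) - (x * t - 1)) := by ring
  have hroots : (t + x) * (y * (t - x) - (x * t + 1)) < (t - x) * (y * (t + x) - (x * t - 1)) := by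
    have hgap : 0 < 2 * t * (x ^ 2 + 1) := by positivity
    linear_combination hgap
  rw [div_le_iff₀ hsub, le_div_iff₀ hadd, ← sub_nonneg, hfactor,
    mul_nonneg_iff_of_mul_lt_mul hsub hadd hroots, sub_nonneg, sub_nonpos]

theorem meets_iff_of_neg_sinh_lt_general (r : ℝ) (x : ℝ) (hx0 : -Real.sinh r < x)
    (hx : x ≤ 0) (y : ℝ) :
    MeetsClosedDisc x y r ↔
      -((-x * Real.sinh r - 1) / (-x + Real.sinh r)) ≤ y ∨
        y ≤ -((-x * Real.sinh r + 1) / (x + Real.sinh r)) := by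
  have hsinh : 0 < sinh r := by linarith
  have hxt : |x| < sinh r := abs_lt.2 ⟨hx0, by linarith⟩
  rw [meetsClosedDisc_iff (sinh_pos_iff.1 hsinh).le, cosh_sq', sq_add_one_mul_sq_add_one_le_iff hxt]
  congr! 2 <;> ring

/-- For every r > 0, every real x with −sinh r < x ≤ 0, and every real y ≠ x, the geodesic
γ(x,y) intersects the closed disc B̄_r(i) iff y ≥ −W_r(−x) or y ≤ −U_r(−x). -/
theorem meets_iff_of_neg_sinh_lt (r : ℝ) (hr : 0 < r) (x : ℝ) (hx0 : -Real.sinh r < x)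
    (hx : x ≤ 0) (y : ℝ) (hy : y ≠ x) :
    MeetsClosedDisc x y r ↔
      -((-x * Real.sinh r - 1) / (-x + Real.sinh r)) ≤ y ∨
        y ≤ -((-x * Real.sinh r + 1) / (x + Real.sinh r)) :=
  meets_iff_of_neg_sinh_lt_general r x hx0 hx y
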